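/- arXiv:2403.14655 — 2 statements merged into one kernel-verified Lean document; each statement's English description precedes it below -/
import Mathlib

section
/- Let K ≥ 1 and N be natural numbers, and let x : Fin K → EuclideanSpace ℝ (Fin (N+1)) be a family of unit vectors (‖x i‖ = 1 for all i). For each pair (i, j), let θ(i,j) := Real.arccos ⟪x i, x j⟫, and define the mean E[θ] := (1/K²) Σ_{i,j} θ(i,j) and the variance Var(θ) := (1/K²) Σ_{i,j} θ(i,j)² − E[θ]². Then (1/(K²·(N+1))) · Σ_{i,j} ‖x i − x j‖² ≤ (1/(N+1)) · (Var(θ) + E[θ]²). -/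
/-!
Chord is at most arc: for unit vectors at angle `θ`, `‖x - y‖² = 2 - 2 cos θ ≤ θ²` since
`1 - θ²/2 ≤ cos θ`. Averaging over all pairs gives the claim, because variance plus squared mean
is the second moment.
-/

open Real

lemma two_sub_two_mul_le_arccos_sq {c : ℝ} (h₁ : -1 ≤ c) (h₂ : c ≤ 1) :
    2 - 2 * c ≤ arccos c ^ 2 := by
  have h := one_sub_sq_div_two_le_cos (x := arccos c)
  rw [cos_arccos h₁ h₂] at h
  linarith

lemma norm_sub_sq_le_arccos_inner_sq {F : Type*} [NormedAddCommGroup F] [InnerProductSpace ℝ F]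
    {x y : F} (hx : ‖x‖ = 1) (hy : ‖y‖ = 1) :
    ‖x - y‖ ^ 2 ≤ arccos (inner ℝ x y) ^ 2 := by
  rw [norm_sub_sq_real, hx, hy]
  linarith [two_sub_two_mul_le_arccos_sq (neg_one_le_real_inner_of_norm_eq_one hx hy)
    (real_inner_le_one_of_norm_eq_one hx hy)]

theorem variance_of_differences_le_second_moment_of_angles_general
    (K N : ℕ)
    (x : Fin K → EuclideanSpace ℝ (Fin (N + 1)))
    (hx : ∀ i, ‖x i‖ = 1) :
    (1 / ((K : ℝ) ^ 2 * (N + 1))) * ∑ i, ∑ j, ‖x i - x j‖ ^ 2 ≤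
      (1 / ((N : ℝ) + 1)) *
        (((1 / (K : ℝ) ^ 2) *
            ∑ i, ∑ j, (Real.arccos (inner ℝ (x i) (x j)) : ℝ) ^ 2 -
          ((1 / (K : ℝ) ^ 2) *
            ∑ i, ∑ j, Real.arccos ((inner ℝ (x i) (x j)) : ℝ)) ^ 2) +
         ((1 / (K : ℝ) ^ 2) *
            ∑ i, ∑ j, Real.arccos ((inner ℝ (x i) (x j)) : ℝ)) ^ 2) := by
  calc (1 / ((K : ℝ) ^ 2 * (N + 1))) * ∑ i, ∑ j, ‖x i - x j‖ ^ 2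
      = (1 / ((N : ℝ) + 1)) * ((1 / (K : ℝ) ^ 2) * ∑ i, ∑ j, ‖x i - x j‖ ^ 2) := by
        rw [mul_comm ((K : ℝ) ^ 2), ← one_div_mul_one_div, mul_assoc]
    _ ≤ (1 / ((N : ℝ) + 1)) *
          ((1 / (K : ℝ) ^ 2) * ∑ i, ∑ j, arccos (inner ℝ (x i) (x j)) ^ 2) := by
      gcongr _ * (_ * ∑ i, ∑ j, ?_) with i _ j _
      exact norm_sub_sq_le_arccos_inner_sq (hx i) (hx j)
    _ = _ := by ring

theorem variance_of_differences_le_second_moment_of_angles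
    (K N : ℕ) (hK : 1 ≤ K)
    (x : Fin K → EuclideanSpace ℝ (Fin (N + 1)))
    (hx : ∀ i, ‖x i‖ = 1) :
    (1 / ((K : ℝ) ^ 2 * (N + 1))) * ∑ i, ∑ j, ‖x i - x j‖ ^ 2 ≤
      (1 / ((N : ℝ) + 1)) *
        (((1 / (K : ℝ) ^ 2) *
            ∑ i, ∑ j, (Real.arccos (inner ℝ (x i) (x j)) : ℝ) ^ 2 -
          ((1 / (K : ℝ) ^ 2) *
            ∑ i, ∑ j, Real.arccos ((inner ℝ (x i) (x j)) : ℝ)) ^ 2) +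
         ((1 / (K : ℝ) ^ 2) *
            ∑ i, ∑ j, Real.arccos ((inner ℝ (x i) (x j)) : ℝ)) ^ 2) :=
  variance_of_differences_le_second_moment_of_angles_general K N x hx
end

section
/- Let K ≥ 1 and N be natural numbers, and let x : Fin K → EuclideanSpace ℝ (Fin (N+1)) be a family of unit vectors (‖x i‖ = 1 for all i). Define for all (i, j, k) ∈ Fin K × Fin K × Fin (N+1) the scaled differences Δ(i,j,k) := (1/(2·K·√(N+1))) · ((x i) k − (x j) k), let μ := (1/(K²·(N+1))) Σ_{i,j,k} Δ(i,j,k) and Var(Δ) := (1/(K²·(N+1))) Σ_{i,j,k} (Δ(i,j,k) − μ)². For each pair (i, j), let θ(i,j) := Real.arccos ⟪x i, x j⟫, E[θ] := (1/K²) Σ_{i,j} θ(i,j) and Var(θ) := (1/K²) Σ_{i,j} θ(i,j)² − E[θ]². Then Var(Δ) ≤ (1/(N+1)) · (Var(θ) + E[θ]²). -/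
/-!
The mean `μ` vanishes because `Δ` is antisymmetric in `(i, j)`, so `VarΔ` is just the normalized
second moment of `Δ`. For each pair, `∑ k, Δ i j k ^ 2` is the squared chord `‖x i - x j‖ ^ 2`
times a factor at most one, and for unit vectors the chord is at most the arc `θ i j`
(from `1 - t ^ 2 / 2 ≤ cos t`). Summing over pairs gives the second moment `Varθ + Eθ ^ 2` of `θ`.
-/

open Finset RealInnerProductSpace

theorem Finset.sum_sum_eq_zero_of_antisymm {ι G : Type*} [Fintype ι] [AddCommGroup G]
    [IsAddTorsionFree G] {f : ι → ι → G} (hf : ∀ i j, f j i = -f i j) :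
    ∑ i, ∑ j, f i j = 0 :=
  self_eq_neg.mp <| calc
    ∑ i, ∑ j, f i j = ∑ j, ∑ i, f i j := sum_comm
    _ = ∑ j, ∑ i, -f j i := sum_congr rfl fun j _ ↦ sum_congr rfl fun i _ ↦ hf j i
    _ = -∑ j, ∑ i, f j i := by simp only [sum_neg_distrib]

theorem norm_sub_sq_le_arccos_inner_sq_s1 {F : Type*} [NormedAddCommGroup F] [InnerProductSpace ℝ F]
    {u v : F} (hu : ‖u‖ = 1) (hv : ‖v‖ = 1) : ‖u - v‖ ^ 2 ≤ Real.arccos ⟪u, v⟫ ^ 2 := by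
  have hcos : Real.cos (Real.arccos ⟪u, v⟫) = ⟪u, v⟫ :=
    Real.cos_arccos (neg_one_le_real_inner_of_norm_eq_one hu hv)
      (real_inner_le_one_of_norm_eq_one hu hv)
  have := Real.one_sub_sq_div_two_le_cos (x := Real.arccos ⟪u, v⟫)
  rw [norm_sub_sq_real, hu, hv]
  linarith

theorem variance_of_scaled_differences_le_second_moment_of_angles_general
    (K N : ℕ) (hK : 1 ≤ K)
    (x : Fin K → EuclideanSpace ℝ (Fin (N + 1)))
    (hx : ∀ i, ‖x i‖ = 1)
    (Δ : Fin K → Fin K → Fin (N + 1) → ℝ)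
    (hΔ : ∀ i j k, Δ i j k =
      (1 / (2 * (K : ℝ) * Real.sqrt ((N : ℝ) + 1))) * (x i k - x j k))
    (μ : ℝ)
    (hμ : μ = (1 / ((K : ℝ) ^ 2 * ((N : ℝ) + 1))) * ∑ i, ∑ j, ∑ k, Δ i j k)
    (VarΔ : ℝ)
    (hVarΔ : VarΔ =
      (1 / ((K : ℝ) ^ 2 * ((N : ℝ) + 1))) * ∑ i, ∑ j, ∑ k, (Δ i j k - μ) ^ 2)
    (θ : Fin K → Fin K → ℝ)
    (hθ : ∀ i j, θ i j = Real.arccos ((inner ℝ (x i) (x j)) : ℝ))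
    (Eθ : ℝ)
    (Varθ : ℝ)
    (hVarθ : Varθ = (1 / (K : ℝ) ^ 2) * (∑ i, ∑ j, (θ i j) ^ 2) - Eθ ^ 2) :
    VarΔ ≤ (1 / ((N : ℝ) + 1)) * (Varθ + Eθ ^ 2) := by
  set a := 1 / (2 * (K : ℝ) * Real.sqrt ((N : ℝ) + 1))
  have ha : a ^ 2 ≤ 1 := by
    have hK' : (1 : ℝ) ≤ K := by exact_mod_cast hK
    have hN : 1 ≤ Real.sqrt ((N : ℝ) + 1) :=
      Real.one_le_sqrt.mpr (le_add_of_nonneg_left N.cast_nonneg)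
    refine pow_le_one₀ (by positivity) (div_le_one_of_le₀ ?_ (by positivity))
    nlinarith
  have hμ0 : μ = 0 := by
    rw [hμ, sum_sum_eq_zero_of_antisymm (f := fun i j ↦ ∑ k, Δ i j k), mul_zero]
    intro i j
    simp only [hΔ, ← sum_neg_distrib]
    exact sum_congr rfl fun k _ ↦ by ring
  have hpair : ∀ i j, ∑ k, Δ i j k ^ 2 ≤ θ i j ^ 2 := fun i j ↦ calc
    ∑ k, Δ i j k ^ 2 = a ^ 2 * ‖x i - x j‖ ^ 2 := by
      simp only [EuclideanSpace.real_norm_sq_eq, mul_sum, hΔ, PiLp.sub_apply, mul_pow]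
    _ ≤ ‖x i - x j‖ ^ 2 := mul_le_of_le_one_left (by positivity) ha
    _ ≤ θ i j ^ 2 := hθ i j ▸ norm_sub_sq_le_arccos_inner_sq_s1 (hx i) (hx j)
  calc VarΔ = 1 / ((K : ℝ) ^ 2 * ((N : ℝ) + 1)) * ∑ i, ∑ j, ∑ k, Δ i j k ^ 2 := by
        simp only [hVarΔ, hμ0, sub_zero]
    _ ≤ 1 / ((K : ℝ) ^ 2 * ((N : ℝ) + 1)) * ∑ i, ∑ j, θ i j ^ 2 := by
        gcongr with i _ j _
        exact hpair i j
    _ = (1 / ((N : ℝ) + 1)) * (Varθ + Eθ ^ 2) := by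
        rw [hVarθ, sub_add_cancel, mul_comm ((K : ℝ) ^ 2), ← one_div_mul_one_div, mul_assoc]

theorem variance_of_scaled_differences_le_second_moment_of_angles
    (K N : ℕ) (hK : 1 ≤ K)
    (x : Fin K → EuclideanSpace ℝ (Fin (N + 1)))
    (hx : ∀ i, ‖x i‖ = 1)
    (Δ : Fin K → Fin K → Fin (N + 1) → ℝ)
    (hΔ : ∀ i j k, Δ i j k =
      (1 / (2 * (K : ℝ) * Real.sqrt ((N : ℝ) + 1))) * (x i k - x j k))
    (μ : ℝ)
    (hμ : μ = (1 / ((K : ℝ) ^ 2 * ((N : ℝ) + 1))) * ∑ i, ∑ j, ∑ k, Δ i j k)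
    (VarΔ : ℝ)
    (hVarΔ : VarΔ =
      (1 / ((K : ℝ) ^ 2 * ((N : ℝ) + 1))) * ∑ i, ∑ j, ∑ k, (Δ i j k - μ) ^ 2)
    (θ : Fin K → Fin K → ℝ)
    (hθ : ∀ i j, θ i j = Real.arccos ((inner ℝ (x i) (x j)) : ℝ))
    (Eθ : ℝ) (hEθ : Eθ = (1 / (K : ℝ) ^ 2) * ∑ i, ∑ j, θ i j)
    (Varθ : ℝ)
    (hVarθ : Varθ = (1 / (K : ℝ) ^ 2) * (∑ i, ∑ j, (θ i j) ^ 2) - Eθ ^ 2) :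
    VarΔ ≤ (1 / ((N : ℝ) + 1)) * (Varθ + Eθ ^ 2) :=
  variance_of_scaled_differences_le_second_moment_of_angles_general K N hK x hx Δ hΔ μ hμ VarΔ hVarΔ
    θ hθ Eθ Varθ hVarθ
end
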